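/- Let (M,d) be a homogeneous metric space. Then Iso(M,d), with the topology of pointwise convergence, is locally compact, σ-compact and second countable. Moreover, if G is a closed subgroup of Iso(M,d) that acts transitively on M and S is the stabiliser in G of a point o ∈ M, then the map gS ↦ g(o) is a homeomorphism from the quotient space G/S onto M. -/

import Mathlib

/-!
Local compactness and transitivity give a radius `r` for which all closed balls of radius `r` are
compact. The points reached from a base point `x₀` by `n` steps of length at most `r / 2` then
form compact sets `C n`, which exhaust `M` because `M` is connected. An isometry moving `x₀` into
`C m` maps `C n` into `C (m + n)`, so by Tychonoff the isometries `f` with `f x₀, f⁻¹ x₀ ∈ C m`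
form a compact set: the pairs `(f, f⁻¹)` make up a closed set, since evaluation is jointly
continuous on the equicontinuous family of isometries. These compact sets exhaust `Iso(M, d)`, and
the one for `m = 1` is a neighbourhood of the identity. Equicontinuity also shows that the
pointwise topology is determined on a countable dense subset of the σ-compact space `M`, whence
second countability. Finally a closed subgroup `G` is σ-compact, so by the open mapping theorem
for σ-compact groups acting transitively on a Baire space the orbit map `g ↦ g o` is open, and
the induced continuous bijection `G ⧸ S → M` is a homeomorphism.
-/

open Metric Set Filter Topology Function

namespace IsometryEquiv

variable {M : Type*} [MetricSpace M]

instance applyMulAction : MulAction (M ≃ᵢ M) M where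
  smul f x := f x
  one_smul _ := rfl
  mul_smul _ _ _ := rfl

@[simp] theorem smul_def (f : M ≃ᵢ M) (x : M) : f • x = f x := rfl

theorem dist_inv_apply (f : M ≃ᵢ M) (x y : M) : dist (f⁻¹ x) y = dist x (f y) := by
  rw [← f.dist_eq, apply_inv_self]

end IsometryEquiv

section Chains

variable {M : Type*} [MetricSpace M]

/-- The points joined to `x` by a chain of `n` steps of length at most `δ`. -/
def chainSet (δ : ℝ) (x : M) (n : ℕ) : Set M := (cthickening δ)^[n] {x}

variable {δ : ℝ} {x : M}

@[simp] theorem chainSet_zero : chainSet δ x 0 = {x} := rfl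

theorem chainSet_succ (n : ℕ) : chainSet δ x (n + 1) = cthickening δ (chainSet δ x n) :=
  iterate_succ_apply' _ _ _

theorem chainSet_one (hδ : 0 ≤ δ) : chainSet δ x 1 = closedBall x δ :=
  cthickening_singleton x hδ

theorem monotone_chainSet : Monotone (chainSet δ x) :=
  monotone_nat_of_le_succ fun n => by rw [chainSet_succ]; exact self_subset_cthickening _

theorem Isometry.image_cthickening_subset {N : Type*} [MetricSpace N] {f : M → N}
    (hf : Isometry f) (E : Set M) : f '' cthickening δ E ⊆ cthickening δ (f '' E) := by
  rintro _ ⟨y, hy, rfl⟩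
  rw [mem_cthickening_iff, infEDist_image hf]
  exact hy

theorem Isometry.image_chainSet_subset {f : M → M} (hf : Isometry f) {m : ℕ}
    (hm : f x ∈ chainSet δ x m) (n : ℕ) : f '' chainSet δ x n ⊆ chainSet δ x (m + n) := by
  induction n with
  | zero => simpa using hm
  | succ n ih =>
    rw [chainSet_succ, ← add_assoc, chainSet_succ]
    exact (hf.image_cthickening_subset _).trans (cthickening_subset_of_subset δ ih)

theorem iUnion_chainSet [ConnectedSpace M] (hδ : 0 < δ) (x : M) :
    ⋃ n, chainSet δ x n = univ := by
  refine (IsClopen.of_thickening_subset_self hδ ?_).eq_univ ⟨x, mem_iUnion.2 ⟨0, rfl⟩⟩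
  rw [thickening_iUnion]
  exact iUnion_mono' fun n =>
    ⟨n + 1, by rw [chainSet_succ]; exact thickening_subset_cthickening _ _⟩

theorem exists_mem_chainSet [ConnectedSpace M] (hδ : 0 < δ) (x y : M) :
    ∃ n, y ∈ chainSet δ x n :=
  mem_iUnion.1 (iUnion_chainSet hδ x ▸ mem_univ y)

theorem IsCompact.cthickening_of_isCompact_closedBall {r : ℝ} (hδ : 0 ≤ δ) (hδr : δ < r)
    (hball : ∀ y : M, IsCompact (closedBall y r)) {K : Set M} (hK : IsCompact K) :
    IsCompact (cthickening δ K) := by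
  obtain ⟨t, -, ht, hKt⟩ := hK.finite_cover_balls (sub_pos.2 hδr)
  refine (ht.isCompact_biUnion fun z _ => hball z).of_isClosed_subset isClosed_cthickening ?_
  rw [hK.cthickening_eq_biUnion_closedBall hδ]
  refine iUnion₂_subset fun y hy w hw => ?_
  obtain ⟨z, hzt, hyz⟩ := mem_iUnion₂.1 (hKt hy)
  refine mem_iUnion₂.2 ⟨z, hzt, ?_⟩
  rw [mem_closedBall] at hw ⊢
  linarith [dist_triangle w y z, mem_ball.1 hyz]

theorem isCompact_chainSet {r : ℝ} (hδ : 0 ≤ δ) (hδr : δ < r)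
    (hball : ∀ y : M, IsCompact (closedBall y r)) (n : ℕ) : IsCompact (chainSet δ x n) := by
  induction n with
  | zero => exact isCompact_singleton
  | succ n ih => rw [chainSet_succ]; exact ih.cthickening_of_isCompact_closedBall hδ hδr hball

end Chains

section Homogeneous

variable {M : Type*} [MetricSpace M]

theorem exists_pos_forall_isCompact_closedBall [LocallyCompactSpace M]
    [MulAction.IsPretransitive (M ≃ᵢ M) M] : ∃ r > 0, ∀ x : M, IsCompact (closedBall x r) := by
  rcases isEmpty_or_nonempty M with hM | ⟨⟨x₀⟩⟩
  · exact ⟨1, one_pos, fun x => isEmptyElim x⟩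
  obtain ⟨K, hK, hKx₀⟩ := exists_compact_mem_nhds x₀
  obtain ⟨r, hr, hrK⟩ := nhds_basis_closedBall.mem_iff.1 hKx₀
  refine ⟨r, hr, fun x => ?_⟩
  obtain ⟨f, rfl⟩ := MulAction.exists_smul_eq (M ≃ᵢ M) x₀ x
  rw [IsometryEquiv.smul_def, ← f.image_closedBall]
  exact (hK.of_isClosed_subset isClosed_closedBall hrK).image f.continuous

theorem sigmaCompactSpace_of_isCompact_closedBall [ConnectedSpace M] {r : ℝ} (hr : 0 < r)
    (hball : ∀ x : M, IsCompact (closedBall x r)) : SigmaCompactSpace M :=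
  let x₀ : M := Classical.arbitrary M
  ⟨⟨chainSet (r / 2) x₀, isCompact_chainSet (half_pos hr).le (half_lt_self hr) hball,
    iUnion_chainSet (half_pos hr) x₀⟩⟩

end Homogeneous

section Isometry

variable {M N : Type*} [MetricSpace M] [MetricSpace N]

theorem isClosed_setOf_isometry : IsClosed {F : M → N | Isometry F} := by
  simp only [Isometry, ofPred_forall]
  exact isClosed_iInter fun x => isClosed_iInter fun y =>
    isClosed_eq ((continuous_apply x).edist (continuous_apply y)) continuous_const

theorem ContinuousOn.apply_of_isometry {X : Type*} [TopologicalSpace X] {f : X → M → N}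
    {g : X → M} {s : Set X} (hf : ContinuousOn f s) (hg : ContinuousOn g s)
    (hiso : ∀ p ∈ s, Isometry (f p)) : ContinuousOn (fun p => f p (g p)) s := by
  have heval : ContinuousOn (fun q : (M → N) × M => q.1 q.2) ({F | Isometry F} ×ˢ univ) :=
    continuousOn_prod_of_continuousOn_lipschitzOnWith' _ 1
      (fun _ hF => (Isometry.lipschitz hF).lipschitzOnWith)
      fun x _ => (continuous_apply x).continuousOn
  exact heval.comp (hf.prodMk hg) fun p hp => ⟨hiso p hp, mem_univ _⟩

theorem isClosed_setOf_isometry_inverse :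
    IsClosed {p : (M → N) × (N → M) |
      Isometry p.1 ∧ Isometry p.2 ∧ LeftInverse p.2 p.1 ∧ RightInverse p.2 p.1} := by
  let I : Set ((M → N) × (N → M)) := {F | Isometry F} ×ˢ {G | Isometry G}
  have hI : IsClosed I := isClosed_setOf_isometry.prod isClosed_setOf_isometry
  have hleft (x : M) : IsClosed (I ∩ (fun p => p.2 (p.1 x)) ⁻¹' {x}) :=
    (continuous_snd.continuousOn.apply_of_isometry
      ((continuous_apply x).comp continuous_fst).continuousOn fun p hp => hp.2
      ).preimage_isClosed_of_isClosed hI isClosed_singleton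
  have hright (y : N) : IsClosed (I ∩ (fun p => p.1 (p.2 y)) ⁻¹' {y}) :=
    (continuous_fst.continuousOn.apply_of_isometry
      ((continuous_apply y).comp continuous_snd).continuousOn fun p hp => hp.1
      ).preimage_isClosed_of_isClosed hI isClosed_singleton
  have : {p : (M → N) × (N → M) |
      Isometry p.1 ∧ Isometry p.2 ∧ LeftInverse p.2 p.1 ∧ RightInverse p.2 p.1} =
      I ∩ (⋂ x, I ∩ (fun p => p.2 (p.1 x)) ⁻¹' {x}) ∩ ⋂ y, I ∩ (fun p => p.1 (p.2 y)) ⁻¹' {y} := by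
    ext p
    simp only [I, mem_ofPred_eq, mem_inter_iff, mem_iInter, mem_prod, mem_preimage,
      mem_singleton_iff, LeftInverse, RightInverse]
    grind
  rw [this]
  exact (hI.inter (isClosed_iInter hleft)).inter (isClosed_iInter hright)

theorem isCompact_setOf_isometry_apply_mem_chainSet [ConnectedSpace M] {δ r : ℝ} (hδ : 0 < δ)
    (hδr : δ < r) (hball : ∀ y : M, IsCompact (closedBall y r)) (x₀ : M) (m : ℕ) :
    IsCompact {F : M → M | Isometry F ∧ F x₀ ∈ chainSet δ x₀ m} := by
  choose n hn using exists_mem_chainSet hδ x₀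
  refine (isCompact_univ_pi fun x => isCompact_chainSet (x := x₀) hδ.le hδr hball (m + n x)
    ).of_isClosed_subset (isClosed_setOf_isometry.inter
      ((isCompact_chainSet hδ.le hδr hball m).isClosed.preimage (continuous_apply x₀))) ?_
  rintro F ⟨hF, hFx₀⟩ x -
  exact hF.image_chainSet_subset hFx₀ (n x) (mem_image_of_mem F (hn x))

end Isometry

section EquiLipschitz

variable {X M N : Type*} [TopologicalSpace X] [PseudoEMetricSpace M] [PseudoEMetricSpace N]
  {φ : X → M → N} {K : NNReal} {D : Set M}

theorem continuous_of_dense_of_lipschitzWith (hL : ∀ x, LipschitzWith K (φ x)) (hD : Dense D)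
    (hφ : ∀ d ∈ D, Continuous fun x => φ x d) : Continuous φ :=
  continuous_pi fun y => (continuous_prod_of_dense_continuous_lipschitzWith'
    (fun p : X × M => φ p.1 p.2) K hD hL hφ).comp (continuous_id.prodMk (continuous_const (y := y)))

theorem Topology.IsInducing.restrict_of_dense_of_lipschitzWith (hφ : IsInducing φ)
    (hL : ∀ x, LipschitzWith K (φ x)) (hD : Dense D) :
    IsInducing fun x (d : D) => φ x d := by
  let r : X → D → N := fun x d => φ x d
  have hr : Continuous r := continuous_pi fun d => (continuous_apply (d : M)).comp hφ.continuous
  refine ⟨le_antisymm (continuous_iff_le_induced.1 hr) ?_⟩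
  rw [hφ.eq_induced, ← continuous_iff_le_induced]
  exact @continuous_of_dense_of_lipschitzWith X M N (.induced r inferInstance) _ _ φ K D hL hD
    fun d hd => @Continuous.comp X (D → N) N (.induced r inferInstance) _ _ _ _
      (continuous_apply (⟨d, hd⟩ : D)) continuous_induced_dom

end EquiLipschitz

namespace MulAction

variable {G X : Type*} [Group G] [MulAction G X] [TopologicalSpace G] [TopologicalSpace X]
  [ContinuousSMul G X] [IsPretransitive G X]

noncomputable def quotientStabilizerHomeomorph (x : X) (hx : IsOpenMap fun g : G => g • x) :
    G ⧸ stabilizer G x ≃ₜ X :=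
  have hmk := QuotientGroup.isQuotientMap_mk (stabilizer G x)
  (Equiv.ofBijective (ofQuotientStabilizer G x) ⟨injective_ofQuotientStabilizer G x, fun y =>
    let ⟨g, hg⟩ := exists_smul_eq G x y; ⟨g, hg⟩⟩).toHomeomorphOfContinuousOpen
    (hmk.continuous_iff.2 (continuous_id.smul continuous_const))
    (IsOpenMap.of_comp hmk.continuous hmk.surjective hx)

@[simp] theorem quotientStabilizerHomeomorph_mk (x : X) (hx : IsOpenMap fun g : G => g • x)
    (g : G) : quotientStabilizerHomeomorph x hx g = g • x := rfl

end MulAction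

namespace IsometryEquiv

variable {M : Type*} [MetricSpace M]

variable (M) in
abbrev pointwiseTopology : TopologicalSpace (M ≃ᵢ M) :=
  TopologicalSpace.induced (fun f : M ≃ᵢ M => (f : M → M)) Pi.topologicalSpace

section PointwiseTopology

attribute [local instance] pointwiseTopology

theorem isInducing_coeFn : IsInducing (fun f : M ≃ᵢ M => (f : M → M)) := ⟨rfl⟩

instance : ContinuousEval (M ≃ᵢ M) M M where
  continuous_eval := continuousOn_univ.1 <|
    isInducing_coeFn.continuous.comp_continuousOn' continuous_fst.continuousOn
      |>.apply_of_isometry continuous_snd.continuousOn fun p _ => p.1.isometry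

instance : ContinuousSMul (M ≃ᵢ M) M := ⟨continuous_eval⟩

instance : IsTopologicalGroup (M ≃ᵢ M) where
  continuous_mul := isInducing_coeFn.continuous_iff.2 <| continuous_pi fun x =>
    continuous_fst.eval (continuous_snd.eval continuous_const)
  continuous_inv := isInducing_coeFn.continuous_iff.2 <| continuous_pi fun x =>
    continuous_iff_continuousAt.2 fun f₀ => by
      -- `f⁻¹ x` is close to `f₀⁻¹ x` exactly when `f (f₀⁻¹ x)` is close to `x`
      rw [ContinuousAt, tendsto_iff_dist_tendsto_zero]
      simp only [comp_apply, dist_inv_apply]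
      simpa using (tendsto_const_nhds (x := x)).dist ((continuous_eval_const (f₀⁻¹ x)).tendsto f₀)

theorem isInducing_coeFn_inv :
    IsInducing (fun f : M ≃ᵢ M => ((f : M → M), (⇑f⁻¹ : M → M))) :=
  .of_comp (by fun_prop) continuous_fst isInducing_coeFn

theorem range_coeFn_inv : range (fun f : M ≃ᵢ M => ((f : M → M), (⇑f⁻¹ : M → M))) =
    {p | Isometry p.1 ∧ Isometry p.2 ∧ LeftInverse p.2 p.1 ∧ RightInverse p.2 p.1} := by
  ext ⟨F, G⟩
  constructor
  · rintro ⟨f, hf⟩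
    obtain ⟨rfl, rfl⟩ := Prod.mk.inj hf
    exact ⟨f.isometry, f⁻¹.isometry, f.inv_apply_self, f.apply_inv_self⟩
  · rintro ⟨hF, -, hGF, hFG⟩
    exact ⟨⟨⟨F, G, hGF, hFG⟩, hF⟩, rfl⟩

theorem isCompact_setOf_apply_mem_inv_apply_mem {x₀ : M} {K : Set M}
    (hK : IsCompact {F : M → M | Isometry F ∧ F x₀ ∈ K}) :
    IsCompact {f : M ≃ᵢ M | f x₀ ∈ K ∧ f⁻¹ x₀ ∈ K} := by
  convert isInducing_coeFn_inv.isCompact_preimage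
    (range_coeFn_inv (M := M) ▸ isClosed_setOf_isometry_inverse) (hK.prod hK) using 1
  ext f
  simp [f.isometry, f⁻¹.isometry]

section Homogeneous

variable [ConnectedSpace M] [LocallyCompactSpace M] [MulAction.IsPretransitive (M ≃ᵢ M) M]

theorem locallyCompactSpace_of_isPretransitive : LocallyCompactSpace (M ≃ᵢ M) := by
  obtain ⟨r, hr, hball⟩ := exists_pos_forall_isCompact_closedBall (M := M)
  let x₀ : M := Classical.arbitrary M
  have hK := isCompact_setOf_apply_mem_inv_apply_mem
    (isCompact_setOf_isometry_apply_mem_chainSet (half_pos hr) (half_lt_self hr) hball x₀ 1)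
  refine hK.locallyCompactSpace_of_mem_nhds_of_group (x := 1) ?_
  have hx₀ : chainSet (r / 2) x₀ 1 ∈ 𝓝 x₀ := by
    rw [chainSet_one (half_pos hr).le]
    exact closedBall_mem_nhds x₀ (half_pos hr)
  have h₁ := (continuous_id (X := M ≃ᵢ M)).eval_const x₀ |>.continuousAt (x := 1)
    |>.preimage_mem_nhds hx₀
  have h₂ := (continuous_inv (G := M ≃ᵢ M)).eval_const x₀ |>.continuousAt (x := 1)
    |>.preimage_mem_nhds hx₀
  exact inter_mem h₁ h₂

theorem sigmaCompactSpace_of_isPretransitive : SigmaCompactSpace (M ≃ᵢ M) := by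
  obtain ⟨r, hr, hball⟩ := exists_pos_forall_isCompact_closedBall (M := M)
  let x₀ : M := Classical.arbitrary M
  refine ⟨⟨fun m => {f | f x₀ ∈ chainSet (r / 2) x₀ m ∧ f⁻¹ x₀ ∈ chainSet (r / 2) x₀ m},
    fun m => isCompact_setOf_apply_mem_inv_apply_mem
      (isCompact_setOf_isometry_apply_mem_chainSet (half_pos hr) (half_lt_self hr) hball x₀ m),
    eq_univ_of_forall fun f => ?_⟩⟩
  obtain ⟨m, hm⟩ := exists_mem_chainSet (half_pos hr) x₀ (f x₀)
  obtain ⟨n, hn⟩ := exists_mem_chainSet (half_pos hr) x₀ (f⁻¹ x₀)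
  exact mem_iUnion.2 ⟨max m n, monotone_chainSet (le_max_left m n) hm,
    monotone_chainSet (le_max_right m n) hn⟩

end Homogeneous

theorem secondCountableTopology_of_separableSpace [TopologicalSpace.SeparableSpace M] :
    SecondCountableTopology (M ≃ᵢ M) := by
  obtain ⟨D, hDc, hD⟩ := TopologicalSpace.exists_countable_dense M
  have : Countable D := hDc.to_subtype
  exact (isInducing_coeFn.restrict_of_dense_of_lipschitzWith
    (fun f : M ≃ᵢ M => f.isometry.lipschitz) hD).secondCountableTopology

theorem exists_homeomorph_quotient_stabilizer [ConnectedSpace M] [LocallyCompactSpace M]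
    (G : Subgroup (M ≃ᵢ M)) (hG : IsClosed (G : Set (M ≃ᵢ M))) [MulAction.IsPretransitive G M]
    (o : M) : ∃ h : G ⧸ MulAction.stabilizer G o ≃ₜ M, ∀ g : G, h g = (g : M ≃ᵢ M) o := by
  have : MulAction.IsPretransitive (M ≃ᵢ M) M :=
    ⟨fun x y => let ⟨g, hg⟩ := MulAction.exists_smul_eq G x y; ⟨g, hg⟩⟩
  have := sigmaCompactSpace_of_isPretransitive (M := M)
  have := hG.sigmaCompactSpace
  exact ⟨MulAction.quotientStabilizerHomeomorph o (isOpenMap_smul_of_sigmaCompact o),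
    MulAction.quotientStabilizerHomeomorph_mk o _⟩

end PointwiseTopology

end IsometryEquiv

/-- the isometry group of a homogeneous metric space, with the
topology of pointwise convergence, is locally compact, σ-compact and second
countable; moreover for every closed transitive subgroup `G` and stabiliser
`S` of a point `o`, the orbit map induces a homeomorphism `G/S ≃ M`. -/
theorem statement12 (M : Type*) [MetricSpace M] [ConnectedSpace M] [LocallyCompactSpace M]
    (hhom : ∀ x y : M, ∃ f : M ≃ᵢ M, f x = y) :
    letI : TopologicalSpace (M ≃ᵢ M) :=
      TopologicalSpace.induced (fun f : M ≃ᵢ M => (⇑f : M → M)) Pi.topologicalSpace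
    LocallyCompactSpace (M ≃ᵢ M) ∧ SigmaCompactSpace (M ≃ᵢ M) ∧
    SecondCountableTopology (M ≃ᵢ M) ∧
    ∀ G : Subgroup (M ≃ᵢ M), IsClosed (G : Set (M ≃ᵢ M)) →
      (∀ x y : M, ∃ g ∈ G, g x = y) →
      ∀ o : M, ∀ S : Subgroup G, (S : Set G) = {g : G | (g : M ≃ᵢ M) o = o} →
        ∃ h : (G ⧸ S) ≃ₜ M, ∀ g : G, h (QuotientGroup.mk g) = (g : M ≃ᵢ M) o := by
  have : MulAction.IsPretransitive (M ≃ᵢ M) M := ⟨hhom⟩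
  obtain ⟨r, hr, hball⟩ := exists_pos_forall_isCompact_closedBall (M := M)
  have : SigmaCompactSpace M := sigmaCompactSpace_of_isCompact_closedBall hr hball
  let := IsometryEquiv.pointwiseTopology M
  refine ⟨IsometryEquiv.locallyCompactSpace_of_isPretransitive,
    IsometryEquiv.sigmaCompactSpace_of_isPretransitive,
    IsometryEquiv.secondCountableTopology_of_separableSpace, fun G hG hGM o S hS => ?_⟩
  have : MulAction.IsPretransitive G M := ⟨fun x y => let ⟨g, hg, hgx⟩ := hGM x y; ⟨⟨g, hg⟩, hgx⟩⟩
  obtain rfl : S = MulAction.stabilizer G o := SetLike.coe_injective hS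
  exact IsometryEquiv.exists_homeomorph_quotient_stabilizer G hG o
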